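/- Let G be a finite group whose commutator subgroup G′ is abelian and satisfies G′ ≠ [G,G,G] (equivalently [N,G] ≠ N for N = G′). Then G is not pseudo-unramified over G′: there exists a G-invariant linear character μ of G′ such that no irreducible character χ of G lying over μ has multiplicity-free restriction χ|_{G′}. -/

import Mathlib

open scoped BigOperators

noncomputable def charInner (G : Type) [Group G] (φ ψ : G → ℂ) : ℂ :=
  (Nat.card G : ℂ)⁻¹ * ∑ᶠ g, φ g * (starRingEnd ℂ) (ψ g)

/-- `χ` is the character of some irreducible complex representation of `G`. -/
def IsIrrChar (G : Type) [Group G] (χ : G → ℂ) : Prop :=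
  ∃ ρ : FDRep ℂ G, CategoryTheory.Simple ρ ∧ FDRep.character ρ = χ

/-- A class function is multiplicity free if it pairs with each irreducible
character with multiplicity at most one. -/
def MultFree (G : Type) [Group G] (φ : G → ℂ) : Prop :=
  ∀ μ : G → ℂ, IsIrrChar G μ → charInner G φ μ = 0 ∨ charInner G φ μ = 1

/-- `G` is unramified over `N`: every irreducible character of `G` restricts to `N`
multiplicity-freely or as a multiple of the trivial character. -/
def UnramifiedOver (G : Type) [Group G] (N : Subgroup G) : Prop :=
  ∀ χ : G → ℂ, IsIrrChar G χ →
    MultFree N (fun n : N => χ n) ∨ ∀ n : N, χ n = χ 1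

def PseudoUnramifiedOver (G : Type) [Group G] (N : Subgroup G) : Prop :=
  ∀ μ : ↥N → ℂ, IsIrrChar ↥N μ →
    ∃ χ : G → ℂ, IsIrrChar G χ ∧ charInner ↥N (fun n : N => χ n) μ ≠ 0 ∧
      MultFree ↥N (fun n : N => χ n)

/-- The conjugate character `ᵍμ(n) = μ(g⁻¹ n g)`. -/
def conjChar {G : Type} [Group G] (N : Subgroup G) [hN : N.Normal] (g : G)
    (μ : ↥N → ℂ) : ↥N → ℂ :=
  fun n => μ ⟨g⁻¹ * ↑n * g, hN.conj_mem' ↑n n.2 g⟩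

lemma conjChar_mul {G : Type} [Group G] (N : Subgroup G) [N.Normal] (a b : G)
    (μ : ↥N → ℂ) : conjChar N (a * b) μ = conjChar N a (conjChar N b μ) := by
  funext n
  simp [conjChar, mul_assoc]

lemma conjChar_one {G : Type} [Group G] (N : Subgroup G) [N.Normal]
    (μ : ↥N → ℂ) : conjChar N 1 μ = μ := by
  funext n
  simp [conjChar]

/-- The inertia subgroup of μ. -/
def inertia {G : Type} [Group G] (N : Subgroup G) [N.Normal] (μ : ↥N → ℂ) :
    Subgroup G where
  carrier := {g | conjChar N g μ = μ}
  one_mem' := conjChar_one N μ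
  mul_mem' := by
    intro a b ha hb
    simp only [Set.mem_setOf_eq] at *
    rw [conjChar_mul, hb, ha]
  inv_mem' := by
    intro a ha
    simp only [Set.mem_setOf_eq] at *
    conv_lhs => rw [← ha]
    rw [← conjChar_mul, inv_mul_cancel, conjChar_one]

/-!
Choose a nontrivial linear character `φ` of `G′` that is trivial on `[G′, G]`; this is possible
because `G′/[G′, G]` is a nontrivial finite abelian group, and it makes `φ` `G`-invariant.
If `χ`, afforded by a simple module `V`, lies over `φ`, the averaging operator
`∑ₙ φ(n)⁻¹ ρ(n)` over `G′` is a `G`-endomorphism of `V` with nonzero trace, hence a nonzero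
scalar by Schur's lemma, and this forces `ρ(n) = φ(n) • id` on `G′` (Clifford).
Then `⟨χ|_{G′}, φ⟩ = χ(1)`, so multiplicity freeness would make `χ` linear; but a linear
character is trivial on `G′`, whereas `φ` is not.
-/

open CategoryTheory Module

theorem LinearMap.commute_of_finrank_eq_one {R M : Type*} [CommSemiring R]
    [StrongRankCondition R] [AddCommMonoid M] [Module R M] [Module.Free R M] (h : finrank R M = 1) (u v : M →ₗ[R] M) :
    Commute u v := by
  obtain ⟨c, rfl⟩ := (u.existsUnique_eq_smul_id_of_finrank_eq_one h).exists
  obtain ⟨d, rfl⟩ := (v.existsUnique_eq_smul_id_of_finrank_eq_one h).exists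
  exact ((Commute.refl LinearMap.id).smul_left c).smul_right d

theorem MonoidHom.conj_coe_apply {H : Type} [Group H] [Finite H] (φ : H →* ℂˣ) (h : H) :
    starRingEnd ℂ (φ h : ℂ) = (φ h⁻¹ : ℂ) := by
  have hpow : (φ h : ℂ) ^ Nat.card H = 1 := by
    rw [← Units.val_pow_eq_pow_val, ← map_pow, pow_card_eq_one', map_one, Units.val_one]
  rw [← Complex.inv_eq_conj (Complex.norm_eq_one_of_pow_eq_one hpow Nat.card_pos.ne'),
    map_inv, Units.val_inv_eq_inv_val]

theorem charInner_eq_sum {H : Type} [Group H] [Fintype H] (φ ψ : H → ℂ) :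
    charInner H φ ψ = (Fintype.card H : ℂ)⁻¹ * ∑ h, φ h * starRingEnd ℂ (ψ h) := by
  rw [charInner, finsum_eq_sum_of_fintype, Nat.card_eq_fintype_card]

namespace FDRep

section Field

variable {k G : Type} [Field k] [Monoid G]

theorem simple_of_finrank_eq_one (V : FDRep k G) (h : finrank k V = 1) : Simple V := by
  have : Simple ((forget₂ (FGModuleCat k) (ModuleCat k)).obj ((Action.forget _ G).obj V)) :=
    _root_.simple_of_finrank_eq_one h
  have : Simple ((Action.forget _ G).obj V) :=
    Functor.simple_of_simple_obj (forget₂ (FGModuleCat k) (ModuleCat k)) _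
  exact Functor.simple_of_simple_obj (Action.forget _ G) V

theorem character_eq_of_ρ_eq_smul_id (V : FDRep k G) {g : G} {c : k}
    (h : V.ρ g = c • LinearMap.id) : V.character g = c * finrank k V := by
  rw [character, h, map_smul, LinearMap.trace_id, smul_eq_mul]

theorem ρ_eq_one_of_mem_commutator {G : Type} [Group G] (V : FDRep k G) (h : finrank k V = 1) {g : G}
    (hg : g ∈ commutator G) : V.ρ g = 1 := by
  suffices commutator G ≤ V.ρ.toHomUnits.ker from congrArg Units.val (this hg)
  rw [commutator_eq_closure, Subgroup.closure_le]
  rintro _ ⟨a, b, rfl⟩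
  rw [SetLike.mem_coe, MonoidHom.mem_ker, map_commutatorElement,
    commutatorElement_eq_one_iff_mul_comm]
  exact Units.ext (LinearMap.commute_of_finrank_eq_one h _ _)

end Field

variable {G : Type} [Group G] {N : Subgroup G} [Fintype N] (V : FDRep ℂ G) (φ : N →* ℂˣ)

noncomputable def isotypicAverage : V →ₗ[ℂ] V :=
  ∑ n : N, (φ n⁻¹ : ℂ) • V.ρ n

theorem ρ_mul_isotypicAverage (m : N) :
    V.ρ m * V.isotypicAverage φ = (φ m : ℂ) • V.isotypicAverage φ := by
  simp only [isotypicAverage, Finset.mul_sum, Finset.smul_sum, mul_smul_comm, ← map_mul]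
  refine Fintype.sum_equiv (Equiv.mulLeft m) _ _ fun n => ?_
  simp [smul_smul, ← Units.val_mul]

theorem commute_ρ_isotypicAverage [N.Normal]
    (hφ : ∀ (g : G) (n : N), φ (MulAut.conjNormal g n) = φ n) (g : G) :
    Commute (V.ρ g) (V.isotypicAverage φ) := by
  simp only [Commute, SemiconjBy, isotypicAverage, Finset.mul_sum, Finset.sum_mul,
    mul_smul_comm, smul_mul_assoc, ← map_mul]
  refine Fintype.sum_equiv (MulAut.conjNormal g).toEquiv _ _ fun n => ?_
  simp [hφ, MulAut.conjNormal_apply, mul_assoc]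

theorem trace_isotypicAverage :
    LinearMap.trace ℂ V (V.isotypicAverage φ) =
      Fintype.card N * charInner N (fun n => V.character n) (fun n => φ n) := by
  rw [charInner_eq_sum, mul_inv_cancel_left₀ (by simp), isotypicAverage, map_sum]
  refine Finset.sum_congr rfl fun n _ => ?_
  rw [map_smul, smul_eq_mul, φ.conj_coe_apply, mul_comm]
  rfl

theorem ρ_eq_smul_id_of_charInner_ne_zero [N.Normal] [Simple V]
    (hφ : ∀ (g : G) (n : N), φ (MulAut.conjNormal g n) = φ n)
    (hne : charInner N (fun n => V.character n) (fun n => φ n) ≠ 0) (n : N) :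
    V.ρ n = (φ n : ℂ) • LinearMap.id := by
  let P : V ⟶ V := ⟨FGModuleCat.ofHom (V.isotypicAverage φ), fun g => by
    ext v; exact LinearMap.congr_fun (V.commute_ρ_isotypicAverage φ hφ g).symm v⟩
  obtain ⟨c, hc⟩ := endomorphism_simple_eq_smul_id ℂ P
  have hP : V.isotypicAverage φ = c • LinearMap.id := congrArg (fun f => f.hom.hom.hom) hc.symm
  have hc0 : c ≠ 0 := by
    rintro rfl
    have htrace := V.trace_isotypicAverage φ
    rw [hP, zero_smul, map_zero, eq_comm, mul_eq_zero] at htrace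
    exact htrace.elim (by simp) hne
  have hmul := V.ρ_mul_isotypicAverage φ n
  rw [hP, mul_smul_comm, Module.End.mul_eq_comp, LinearMap.comp_id, smul_comm] at hmul
  exact smul_right_injective _ hc0 hmul

theorem charInner_eq_finrank_of_ρ_eq_smul_id
    (hρ : ∀ n : N, V.ρ n = (φ n : ℂ) • LinearMap.id) :
    charInner N (fun n => V.character n) (fun n => φ n) = finrank ℂ V := by
  have hterm (n : N) : V.character n * starRingEnd ℂ (φ n) = finrank ℂ V := by
    rw [V.character_eq_of_ρ_eq_smul_id (hρ n), φ.conj_coe_apply, mul_right_comm,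
      ← Units.val_mul, ← map_mul, mul_inv_cancel, map_one, Units.val_one, one_mul]
  rw [charInner_eq_sum, Finset.sum_congr rfl fun n _ => hterm n, Finset.sum_const,
    Finset.card_univ, nsmul_eq_mul, inv_mul_cancel_left₀ (by simp)]

end FDRep

theorem isIrrChar_linear {H : Type} [Group H] (φ : H →* ℂˣ) :
    IsIrrChar H (fun h => (φ h : ℂ)) := by
  let V := FDRep.of ((algebraMap ℂ (Module.End ℂ ℂ) : ℂ →* Module.End ℂ ℂ).comp
    ((Units.coeHom ℂ).comp φ))
  have hρ (h : H) : V.ρ h = (φ h : ℂ) • LinearMap.id := by ext; simp [V]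
  refine ⟨V, V.simple_of_finrank_eq_one (finrank_self ℂ), funext fun h => ?_⟩
  rw [V.character_eq_of_ρ_eq_smul_id (hρ h), finrank_self, Nat.cast_one, mul_one]

theorem exists_monoidHom_units_apply_ne_one {A : Type} [Group A] [Finite A]
    (hA : ∀ a b : A, a * b = b * a) {K : Subgroup A} {a : A} (ha : a ∉ K) :
    ∃ φ : A →* ℂˣ, φ a ≠ 1 ∧ K ≤ φ.ker := by
  let _ : CommGroup A := { mul_comm := hA }
  obtain ⟨ψ, hψ⟩ := CommGroup.exists_apply_ne_one_of_hasEnoughRootsOfUnity (A ⧸ K) ℂ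
    (mt (QuotientGroup.eq_one_iff a).mp ha)
  refine ⟨ψ.comp (QuotientGroup.mk' K), hψ, fun k hk => ?_⟩
  simp [(QuotientGroup.eq_one_iff k).mpr hk]

open scoped commutatorElement in
theorem apply_conjNormal_eq_of_le_ker {G A : Type} [Group G] [Group A] {N : Subgroup G}
    [N.Normal] (φ : N →* A) (hφ : (⁅N, ⊤⁆ : Subgroup G).subgroupOf N ≤ φ.ker) (g : G) (n : N) :
    φ (MulAut.conjNormal g n) = φ n := by
  have hc : ⁅(n⁻¹ : G), g⁆ ∈ ⁅N, ⊤⁆ :=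
    Subgroup.commutator_mem_commutator (inv_mem n.2) (Subgroup.mem_top g)
  let c : N := ⟨_, Subgroup.commutator_le_left N ⊤ hc⟩
  have hconj : MulAut.conjNormal g n = n * c := by
    ext; simp [c, commutatorElement_def, mul_assoc]
  have hcker : c ∈ φ.ker := hφ (Subgroup.mem_subgroupOf.mpr hc)
  rw [hconj, map_mul, MonoidHom.mem_ker.mp hcker, mul_one]

/-- If G' is abelian and [G',G] ⊊ G', then G is not pseudo-unramified over G':
there is a G-invariant linear character μ of G' such that no irreducible
character of G lying over μ restricts to G' multiplicity-freely. -/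
theorem stmt_14 {G : Type} [Group G] [Finite G]
    (hab : ∀ a b : ↥(commutator G), a * b = b * a)
    (hne : ⁅commutator G, (⊤ : Subgroup G)⁆ < commutator G) :
    ∃ μ : ↥(commutator G) → ℂ, IsIrrChar ↥(commutator G) μ ∧ μ 1 = 1 ∧
      (∀ g : G, conjChar (commutator G) g μ = μ) ∧
      ∀ χ : G → ℂ, IsIrrChar G χ →
        charInner ↥(commutator G) (fun n : commutator G => χ n) μ ≠ 0 →
        ¬ MultFree ↥(commutator G) (fun n : commutator G => χ n) := by
  let _ : Fintype (commutator G) := Fintype.ofFinite _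
  obtain ⟨x, hx, hxK⟩ := SetLike.exists_of_lt hne
  obtain ⟨φ, hφx, hφK⟩ := exists_monoidHom_units_apply_ne_one hab
    (K := (⁅commutator G, ⊤⁆ : Subgroup G).subgroupOf (commutator G)) (a := ⟨x, hx⟩)
    (mt Subgroup.mem_subgroupOf.mp hxK)
  have hφ := apply_conjNormal_eq_of_le_ker φ hφK
  refine ⟨fun n => φ n, isIrrChar_linear φ, by simp, fun g => funext fun n => ?_, ?_⟩
  · exact congrArg Units.val ((congrArg φ (Subtype.ext (by simp))).trans (hφ g⁻¹ n))
  rintro _ ⟨V, hV, rfl⟩ hover hmf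
  have hρ := V.ρ_eq_smul_id_of_charInner_ne_zero φ hφ hover
  have hinner := V.charInner_eq_finrank_of_ρ_eq_smul_id φ hρ
  have hdim : finrank ℂ V = 1 := by
    rcases hmf _ (isIrrChar_linear φ) with h | h <;> rw [hinner] at h hover
    · exact absurd h hover
    · exact_mod_cast h
  have hρx : V.ρ x = (1 : ℂ) • LinearMap.id := by
    rw [V.ρ_eq_one_of_mem_commutator hdim hx, one_smul]
    rfl
  have hχx := (V.character_eq_of_ρ_eq_smul_id (hρ ⟨x, hx⟩)).symm.trans
    (V.character_eq_of_ρ_eq_smul_id hρx)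
  rw [hdim, Nat.cast_one, mul_one, mul_one] at hχx
  exact hφx (Units.ext hχx)
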